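/- arXiv:2411.19745 — 13 statements merged into one kernel-verified Lean document; each statement's English description precedes it below -/
import Mathlib

section
/- Let f : X → Y be multi-split continuous at p ∈ X, and let Z_p and Z̃_p be two sets of extended values of f at p. Then every set B with Z_p ⊆ B ⊆ Z_p ∪ Z̃_p is also a set of extended values of f at p. -/
open Filter Topology Set

universe u v w

variable {X : Type u} {Y : Type v} [TopologicalSpace X] [TopologicalSpace Y]

/-- `Z` is a set of extended values of `f` at `p`. -/
def ExtendedValues (f : X → Y) (p : X) (Z : Set Y) : Prop :=
  Z.Finite ∧ Z.Nonempty ∧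
    (∀ y ∈ Z, ∀ U ∈ 𝓝 p, ∀ V ∈ 𝓝 y, (f '' U ∩ V).Nonempty) ∧
    (∀ V ∈ 𝓝ˢ Z, ∃ U ∈ 𝓝 p, f '' U ⊆ V)

/-- `f` is multi-split continuous at `p`. -/
def MultiSplitAt (f : X → Y) (p : X) : Prop := ∃ Z : Set Y, ExtendedValues f p Z

theorem stmt2 (f : X → Y) (p : X) (Z Z' B : Set Y)
    (hZ : ExtendedValues f p Z) (hZ' : ExtendedValues f p Z')
    (h1 : Z ⊆ B) (h2 : B ⊆ Z ∪ Z') :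
    ExtendedValues f p B := by
  obtain ⟨hfin, hne, ha, hb⟩ := hZ
  obtain ⟨hfin', hne', ha', hb'⟩ := hZ'
  refine ⟨(hfin.union hfin').subset h2, hne.mono h1, ?_, ?_⟩
  · intro y hy U hU V hV
    rcases h2 hy with h | h
    · exact ha y h U hU V hV
    · exact ha' y h U hU V hV
  · intro V hV
    exact hb V (nhdsSet_mono h1 hV)
end

section
/- Let Y be a Hausdorff space and let f : X → Y be multi-split continuous at p ∈ X. Then the set of extended values Z_p of f at p is unique. -/
open Filter Topology Set

universe u v w

variable {X : Type u} {Y : Type v} [TopologicalSpace X] [TopologicalSpace Y]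

lemma extendedValues_subset [T2Space Y] {f : X → Y} {p : X} {Z Z' : Set Y}
    (hZ : ExtendedValues f p Z) (hZ' : ExtendedValues f p Z') : Z ⊆ Z' := by
  intro y hy
  by_contra hyZ'
  obtain ⟨-, -, ha, -⟩ := hZ
  obtain ⟨hfin, -, -, hb⟩ := hZ'
  have hsep : SeparatedNhds ({y} : Set Y) Z' :=
    SeparatedNhds.of_isCompact_isCompact isCompact_singleton hfin.isCompact
      (by simpa [Set.disjoint_singleton_left] using hyZ')
  obtain ⟨U, V, hUo, hVo, hyU, hZV, hdisj⟩ := hsep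
  obtain ⟨W, hW, hfW⟩ := hb V (hVo.mem_nhdsSet.2 hZV)
  obtain ⟨z, hz1, hz2⟩ := ha y hy W hW U (hUo.mem_nhds (hyU rfl))
  exact hdisj.ne_of_mem hz2 (hfW hz1) rfl

theorem stmt3 [T2Space Y] (f : X → Y) (p : X) (Z Z' : Set Y)
    (hZ : ExtendedValues f p Z) (hZ' : ExtendedValues f p Z') : Z = Z' :=
  Set.Subset.antisymm (extendedValues_subset hZ hZ') (extendedValues_subset hZ' hZ)
end

section
/- If f : X → Y and g : Y → Z are globally multi-split continuous functions between topological spaces, then the composition g ∘ f : X → Z is globally multi-split continuous. -/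
open Filter Topology Set

universe u v w

variable {X : Type u} {Y : Type v} [TopologicalSpace X] [TopologicalSpace Y]

/-!
With `F = map f (𝓝 p)`, a finite set `S` is a set of extended values of `f` at `p` exactly when
every point of `S` is a cluster point of `F` and `F ≤ 𝓝ˢ S`. The second condition composes: if
`F ≤ 𝓝ˢ S` and `map g (𝓝 y) ≤ 𝓝ˢ (W y)` for `y ∈ S`, then `map g F ≤ 𝓝ˢ (⋃ y ∈ S, W y)`.
The first is restored by discarding the points of the finite set `⋃ y ∈ S, W y` that are not
cluster points of `map g F`: each has a neighbourhood that `map g F` eventually avoids, so the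
remaining points still carry the filter, and they form a nonempty set because `map g F ≠ ⊥`.
-/

theorem Filter.le_nhdsSet_setOf_clusterPt {α : Type*} [TopologicalSpace α] {l : Filter α}
    {s : Set α} (hs : IsCompact s) (h : l ≤ 𝓝ˢ s) : l ≤ 𝓝ˢ {x ∈ s | ClusterPt x l} := by
  intro V hV
  obtain ⟨U, hUo, hsU, hUV⟩ := mem_nhdsSet_iff_exists.1 hV
  have hdisj : Disjoint l (𝓝ˢ (s \ U)) :=
    (hs.diff hUo).disjoint_nhdsSet_right.2 fun x hx ↦ by
      have : ¬ClusterPt x l := fun hx' ↦ hx.2 (hsU ⟨hx.1, hx'⟩)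
      rwa [clusterPt_iff_not_disjoint, not_not, disjoint_comm] at this
  have hle : l ≤ 𝓝ˢ U ⊔ 𝓝ˢ (s \ U) := by
    rw [← nhdsSet_union, union_sdiff_self]
    exact h.trans (nhdsSet_mono subset_union_right)
  exact mem_of_superset (hdisj.left_le_of_le_sup_right hle hUo.mem_nhdsSet_self) hUV

theorem Filter.map_le_nhdsSet_biUnion {Z : Type*} [TopologicalSpace Z] {l : Filter Y}
    {g : Y → Z} {S : Set Y} {W : Y → Set Z} (hl : l ≤ 𝓝ˢ S)
    (hW : ∀ y ∈ S, map g (𝓝 y) ≤ 𝓝ˢ (W y)) : map g l ≤ 𝓝ˢ (⋃ y ∈ S, W y) := by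
  refine map_le_iff_le_comap.2 (hl.trans (nhdsSet_le.2 fun y hy ↦ map_le_iff_le_comap.1 ?_))
  exact (hW y hy).trans (nhdsSet_mono (subset_biUnion_of_mem hy))

theorem clusterPt_map_nhds_iff {f : X → Y} {p : X} {y : Y} :
    ClusterPt y (map f (𝓝 p)) ↔ ∀ U ∈ 𝓝 p, ∀ V ∈ 𝓝 y, (f '' U ∩ V).Nonempty := by
  rw [clusterPt_iff_nonempty]
  refine ⟨fun h U hU V hV ↦ (h hV (image_mem_map hU)).mono fun _ hx ↦ ⟨hx.2, hx.1⟩, ?_⟩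
  exact fun h V hV t ht ↦ (h _ ht V hV).mono fun _ hx ↦ ⟨hx.2, image_preimage_subset f t hx.1⟩

theorem extendedValues_iff {f : X → Y} {p : X} {S : Set Y} :
    ExtendedValues f p S ↔ S.Finite ∧ S.Nonempty ∧
      (∀ y ∈ S, ClusterPt y (map f (𝓝 p))) ∧ map f (𝓝 p) ≤ 𝓝ˢ S := by
  simp only [ExtendedValues, clusterPt_map_nhds_iff, le_def, mem_map_iff_exists_image]

theorem multiSplitAt_of_map_le_nhdsSet {f : X → Y} {p : X} {T : Set Y} (hT : T.Finite)
    (h : map f (𝓝 p) ≤ 𝓝ˢ T) : MultiSplitAt f p := by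
  have hle := le_nhdsSet_setOf_clusterPt hT.isCompact h
  have hne : {y ∈ T | ClusterPt y (map f (𝓝 p))}.Nonempty :=
    nhdsSet_neBot_iff.1 (neBot_of_le hle)
  exact ⟨_, extendedValues_iff.2 ⟨hT.subset (sep_subset _ _), hne, fun _ hy ↦ hy.2, hle⟩⟩

theorem stmt4 {Z : Type w} [TopologicalSpace Z] (f : X → Y) (g : Y → Z)
    (hf : ∀ p : X, MultiSplitAt f p) (hg : ∀ q : Y, MultiSplitAt g q) :
    ∀ p : X, MultiSplitAt (g ∘ f) p := by
  intro p
  obtain ⟨S, hS⟩ := hf p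
  choose W hW using hg
  obtain ⟨hSfin, -, -, hSle⟩ := extendedValues_iff.1 hS
  refine multiSplitAt_of_map_le_nhdsSet (hSfin.biUnion fun y _ ↦ (hW y).1) ?_
  rw [← map_map]
  exact map_le_nhdsSet_biUnion hSle fun y _ ↦ (extendedValues_iff.1 (hW y)).2.2.2
end

section
/- A function f : X → Y is multi-split continuous at p ∈ X if and only if there is a finite non-empty set Z_p ⊆ Y such that (a') for every y ∈ Z_p there is a net ⟨x_λ⟩ converging to p in X with ⟨f(x_λ)⟩ converging to y in Y, and (b') for every net ⟨x_λ⟩ converging to p, some y ∈ Z_p is a cluster point of ⟨f(x_λ)⟩. -/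
open Filter Topology Set

universe u v w

variable {X : Type u} {Y : Type v} [TopologicalSpace X] [TopologicalSpace Y]

/-- `le` is an upward directed preorder on `ι`. -/
def IsDirectedPre {ι : Type w} (le : ι → ι → Prop) : Prop :=
  (∀ i, le i i) ∧ (∀ i j k, le i j → le j k → le i k) ∧ ∀ i j, ∃ k, le i k ∧ le j k

/-- `p` is a limit point of the net `x` indexed by `(ι, le)`. -/
def IsNetLimit {ι : Type w} {A : Type*} [TopologicalSpace A] (le : ι → ι → Prop)
    (x : ι → A) (p : A) : Prop := ∀ U ∈ 𝓝 p, ∃ i₀, ∀ i, le i₀ i → x i ∈ U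

/-- `p` is a cluster point of the net `x` indexed by `(ι, le)`. -/
def IsNetCluster {ι : Type w} {A : Type*} [TopologicalSpace A] (le : ι → ι → Prop)
    (x : ι → A) (p : A) : Prop := ∀ U ∈ 𝓝 p, ∀ i₀, ∃ i, le i₀ i ∧ x i ∈ U

/-!
Conditions (a) and (b) are statements about the filter `map f (𝓝 p)`: (a) says that every point of `Z`
is a cluster point of it and (b) that it is finer than `𝓝ˢ Z`. A net carries the same information
as its filter of tails, and conversely a non-trivial filter `F` is the limit of a net `s ↦ x s ∈ s`
indexed by the members of `F` under reverse inclusion. Through this dictionary (a) becomes (a'),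
and (b) becomes (b') because a non-trivial filter finer than `𝓝ˢ Z` clusters at some point of the
compact set `Z`.
-/

section TailsFilter

variable {ι : Type*} {le : ι → ι → Prop}

def tailsFilter (le : ι → ι → Prop) : Filter ι := ⨅ i₀, 𝓟 {i | le i₀ i}

theorem mem_tailsFilter (hle : IsDirectedPre le) [Nonempty ι] {s : Set ι} :
    s ∈ tailsFilter le ↔ ∃ i₀, ∀ i, le i₀ i → i ∈ s := by
  rw [tailsFilter, mem_iInf_of_directed]
  · simp only [mem_principal, subset_def, mem_ofPred_eq]
  · intro i j
    obtain ⟨k, hik, hjk⟩ := hle.2.2 i j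
    exact ⟨k, principal_mono.2 fun l hl => hle.2.1 _ _ _ hik hl,
      principal_mono.2 fun l hl => hle.2.1 _ _ _ hjk hl⟩

theorem tailsFilter_neBot (hle : IsDirectedPre le) [Nonempty ι] : NeBot (tailsFilter le) :=
  forall_mem_nonempty_iff_neBot.1 fun _ hs =>
    let ⟨i₀, hi₀⟩ := (mem_tailsFilter hle).1 hs
    ⟨i₀, hi₀ i₀ (hle.1 i₀)⟩

theorem frequently_tailsFilter (hle : IsDirectedPre le) [Nonempty ι] {P : ι → Prop} :
    (∃ᶠ i in tailsFilter le, P i) ↔ ∀ i₀, ∃ i, le i₀ i ∧ P i := by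
  simp only [Filter.Frequently, Filter.Eventually, mem_tailsFilter hle, mem_ofPred_eq]
  push Not
  rfl

theorem isNetLimit_iff_tendsto {A : Type*} [TopologicalSpace A] (hle : IsDirectedPre le)
    [Nonempty ι] {x : ι → A} {a : A} :
    IsNetLimit le x a ↔ Tendsto x (tailsFilter le) (𝓝 a) := by
  simp only [IsNetLimit, tendsto_def, mem_tailsFilter hle, mem_preimage]

theorem isNetCluster_iff_mapClusterPt {A : Type*} [TopologicalSpace A] (hle : IsDirectedPre le)
    [Nonempty ι] {x : ι → A} {a : A} :
    IsNetCluster le x a ↔ MapClusterPt a (tailsFilter le) x := by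
  simp only [IsNetCluster, mapClusterPt_iff_frequently, frequently_tailsFilter hle]

end TailsFilter

theorem Filter.exists_net_tendsto {α : Type u} (F : Filter α) [NeBot F] :
    ∃ (ι : Type (max u w)) (le : ι → ι → Prop) (x : ι → α),
      Nonempty ι ∧ IsDirectedPre le ∧ Tendsto x (tailsFilter le) F := by
  refine ⟨ULift.{w} {s // s ∈ F}, fun a b => b.down.1 ⊆ a.down.1,
    fun a => (nonempty_of_mem a.down.2).some, ⟨⟨⟨univ, univ_mem⟩⟩⟩,
    ⟨fun _ => subset_rfl, fun _ _ _ hij hjk => hjk.trans hij, fun a b =>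
      ⟨⟨⟨_, inter_mem a.down.2 b.down.2⟩⟩, inter_subset_left, inter_subset_right⟩⟩,
    fun s hs => mem_iInf_of_mem ⟨⟨s, hs⟩⟩ <| mem_principal.2 fun a ha => ?_⟩
  exact ha (nonempty_of_mem a.down.2).some_mem

theorem IsCompact.exists_clusterPt_of_le_nhdsSet {K : Set X} (hK : IsCompact K) {F : Filter X}
    [NeBot F] (hF : F ≤ 𝓝ˢ K) : ∃ y ∈ K, ClusterPt y F := by
  by_contra! h
  have hdisj : Disjoint (𝓝ˢ K) F := hK.disjoint_nhdsSet_left.2 fun y hy =>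
    not_not.1 (clusterPt_iff_not_disjoint.not.1 (h y hy))
  exact NeBot.ne ‹_› (hdisj.symm.eq_bot_of_le hF)

theorem mapClusterPt_iff_forall_image_inter_nonempty {α : Type*} {F : Filter α} {f : α → Y}
    {y : Y} : MapClusterPt y F f ↔ ∀ U ∈ F, ∀ V ∈ 𝓝 y, (f '' U ∩ V).Nonempty := by
  simp only [mapClusterPt_iff_frequently, frequently_iff, image_inter_nonempty_iff]
  exact forall₂_comm

theorem tendsto_iff_forall_exists_image_subset {α β : Type*} {F : Filter α} {G : Filter β}
    {f : α → β} : Tendsto f F G ↔ ∀ V ∈ G, ∃ U ∈ F, f '' U ⊆ V := by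
  simp only [tendsto_def, image_subset_iff, exists_mem_subset_iff]

theorem extendedValues_iff_s5 {f : X → Y} {p : X} {Z : Set Y} :
    ExtendedValues f p Z ↔ Z.Finite ∧ Z.Nonempty ∧ (∀ y ∈ Z, MapClusterPt y (𝓝 p) f) ∧
      Tendsto f (𝓝 p) (𝓝ˢ Z) := by
  simp only [ExtendedValues, mapClusterPt_iff_forall_image_inter_nonempty,
    tendsto_iff_forall_exists_image_subset]

theorem mapClusterPt_iff_exists_net {f : X → Y} {p : X} {y : Y} :
    MapClusterPt y (𝓝 p) f ↔ ∃ (ι : Type (max u w)) (le : ι → ι → Prop) (x : ι → X),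
      Nonempty ι ∧ IsDirectedPre le ∧ IsNetLimit le x p ∧ IsNetLimit le (f ∘ x) y := by
  constructor
  · intro h
    have : NeBot (𝓝 p ⊓ comap f (𝓝 y)) := by
      rw [← map_neBot_iff f, Filter.push_pull, inf_comm]
      exact h
    obtain ⟨ι, le, x, hne, hle, hx⟩ := (𝓝 p ⊓ comap f (𝓝 y)).exists_net_tendsto.{u, w}
    rw [tendsto_inf, tendsto_comap_iff] at hx
    exact ⟨ι, le, x, hne, hle, (isNetLimit_iff_tendsto hle).2 hx.1,
      (isNetLimit_iff_tendsto hle).2 hx.2⟩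
  · rintro ⟨ι, le, x, hne, hle, hx, hfx⟩
    have := tailsFilter_neBot hle
    rw [isNetLimit_iff_tendsto hle] at hx hfx
    exact hfx.mapClusterPt.of_comp hx

theorem tendsto_nhdsSet_iff_forall_net {f : X → Y} {p : X} {K : Set Y} (hK : IsCompact K) :
    Tendsto f (𝓝 p) (𝓝ˢ K) ↔ ∀ (ι : Type (max u w)) (le : ι → ι → Prop) (x : ι → X),
      Nonempty ι → IsDirectedPre le → IsNetLimit le x p → ∃ y ∈ K, IsNetCluster le (f ∘ x) y := by
  constructor
  · intro hf ι le x hne hle hx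
    have := tailsFilter_neBot hle
    obtain ⟨y, hy, hcl⟩ :=
      hK.exists_clusterPt_of_le_nhdsSet (hf.comp ((isNetLimit_iff_tendsto hle).1 hx))
    exact ⟨y, hy, (isNetCluster_iff_mapClusterPt hle).2 hcl⟩
  · intro h
    by_contra hf
    obtain ⟨V, hV, hVp⟩ : ∃ V ∈ 𝓝ˢ K, f ⁻¹' V ∉ 𝓝 p := by simpa [tendsto_def] using hf
    have := notMem_iff_inf_principal_compl.1 hVp
    obtain ⟨ι, le, x, hne, hle, hx⟩ := (𝓝 p ⊓ 𝓟 (f ⁻¹' V)ᶜ).exists_net_tendsto.{u, w}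
    rw [tendsto_inf, tendsto_principal] at hx
    obtain ⟨y, hy, hcl⟩ := h ι le x hne hle ((isNetLimit_iff_tendsto hle).2 hx.1)
    have hfreq := ((isNetCluster_iff_mapClusterPt hle).1 hcl).frequently
      (mem_nhdsSet_iff_forall.1 hV y hy)
    obtain ⟨i, hiV, hiV'⟩ := (hfreq.and_eventually hx.2).exists
    exact hiV' hiV

theorem stmt5 (f : X → Y) (p : X) :
    MultiSplitAt f p ↔
      ∃ Z : Set Y, Z.Finite ∧ Z.Nonempty ∧
        (∀ y ∈ Z, ∃ (ι : Type (max u v)) (le : ι → ι → Prop) (x : ι → X),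
            Nonempty ι ∧ IsDirectedPre le ∧ IsNetLimit le x p ∧ IsNetLimit le (f ∘ x) y) ∧
        (∀ (ι : Type (max u v)) (le : ι → ι → Prop) (x : ι → X),
            Nonempty ι → IsDirectedPre le → IsNetLimit le x p →
            ∃ y ∈ Z, IsNetCluster le (f ∘ x) y) := by
  simp only [MultiSplitAt, extendedValues_iff_s5]
  exact exists_congr fun Z => and_congr_right fun hZ => and_congr_right fun _ =>
    and_congr (forall₂_congr fun _ _ => mapClusterPt_iff_exists_net)
      (tendsto_nhdsSet_iff_forall_net hZ.isCompact)
end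

section
/- Let Y be a Hausdorff space and let f : X → Y be multi-split continuous at p ∈ X. Then the set of extended values of f at p equals the set of all y ∈ Y for which there exists a net ⟨x_λ⟩ converging to p in X such that y is a cluster point of the net ⟨f(x_λ)⟩. -/
open Filter Topology Set

universe u v w

variable {X : Type u} {Y : Type v} [TopologicalSpace X] [TopologicalSpace Y]

theorem stmt6 [T2Space Y] (f : X → Y) (p : X) (Z : Set Y)
    (hZ : ExtendedValues f p Z) :
    Z = {y : Y | ∃ (ι : Type (max u v)) (le : ι → ι → Prop) (x : ι → X),
          Nonempty ι ∧ IsDirectedPre le ∧ IsNetLimit le x p ∧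
            IsNetCluster le (f ∘ x) y} := by
  obtain ⟨hfin, -, ha, hb⟩ := hZ
  ext y
  constructor
  · intro hy
    -- construct the net indexed by pairs of neighborhoods
    have hsel : ∀ q : {q : Set X × Set Y // q.1 ∈ 𝓝 p ∧ q.2 ∈ 𝓝 y},
        ∃ a, a ∈ q.1.1 ∧ f a ∈ q.1.2 := by
      rintro ⟨⟨U, V⟩, hU, hV⟩
      obtain ⟨w, ⟨a, haU, rfl⟩, hwV⟩ := ha y hy U hU V hV
      exact ⟨a, haU, hwV⟩
    refine ⟨{q : Set X × Set Y // q.1 ∈ 𝓝 p ∧ q.2 ∈ 𝓝 y},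
      fun a b => b.1.1 ⊆ a.1.1 ∧ b.1.2 ⊆ a.1.2,
      fun q => (hsel q).choose,
      ⟨⟨(Set.univ, Set.univ), univ_mem, univ_mem⟩⟩,
      ⟨fun i => ⟨subset_rfl, subset_rfl⟩,
       fun i j k hij hjk => ⟨hjk.1.trans hij.1, hjk.2.trans hij.2⟩,
       fun i j => ⟨⟨(i.1.1 ∩ j.1.1, i.1.2 ∩ j.1.2),
          inter_mem i.2.1 j.2.1, inter_mem i.2.2 j.2.2⟩,
          ⟨Set.inter_subset_left, Set.inter_subset_left⟩,
          ⟨Set.inter_subset_right, Set.inter_subset_right⟩⟩⟩,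
      ?_, ?_⟩
    · intro U hU
      exact ⟨⟨(U, Set.univ), hU, univ_mem⟩,
        fun i hi => hi.1 (hsel i).choose_spec.1⟩
    · intro V hV i₀
      set j : {q : Set X × Set Y // q.1 ∈ 𝓝 p ∧ q.2 ∈ 𝓝 y} :=
        ⟨(i₀.1.1, i₀.1.2 ∩ V), i₀.2.1, inter_mem i₀.2.2 hV⟩ with hjdef
      have : f (hsel j).choose ∈ i₀.1.2 ∩ V := (hsel j).choose_spec.2
      exact ⟨j, ⟨subset_rfl, Set.inter_subset_left⟩, this.2⟩
  · rintro ⟨ι, le, x, ⟨i⟩, ⟨hrefl, htrans, hdir⟩, hlim, hcl⟩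
    by_contra hy
    -- separate y from each point of Z
    have hsep : ∀ z ∈ Z, ∃ Vz Wz : Set Y,
        IsOpen Vz ∧ IsOpen Wz ∧ z ∈ Vz ∧ y ∈ Wz ∧ Disjoint Vz Wz := by
      intro z hz
      obtain ⟨Vz, Wz, hVo, hWo, hzV, hyW, hd⟩ :=
        t2_separation (show z ≠ y from fun h => hy (h ▸ hz))
      exact ⟨Vz, Wz, hVo, hWo, hzV, hyW, hd⟩
    choose! V W hVo hWo hzV hyW hd using hsep
    have hVmem : (⋃ z ∈ Z, V z) ∈ 𝓝ˢ Z := by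
      refine (isOpen_biUnion fun z hz => hVo z hz).mem_nhdsSet.mpr ?_
      intro z hz
      exact Set.mem_biUnion hz (hzV z hz)
    have hWmem : (⋂ z ∈ Z, W z) ∈ 𝓝 y := by
      rw [Filter.biInter_mem hfin]
      exact fun z hz => (hWo z hz).mem_nhds (hyW z hz)
    obtain ⟨U, hU, hfU⟩ := hb _ hVmem
    obtain ⟨i₀, hi₀⟩ := hlim U hU
    obtain ⟨j, hij, hj⟩ := hcl _ hWmem i₀
    have hfj : f (x j) ∈ ⋃ z ∈ Z, V z := hfU ⟨x j, hi₀ j hij, rfl⟩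
    obtain ⟨z, hz, hmem⟩ := Set.mem_iUnion₂.mp hfj
    exact (hd z hz).ne_of_mem hmem (Set.mem_iInter₂.mp hj z hz) rfl
end

section
/- Let Y be a Hausdorff space and f : X → Y be multi-split continuous at p ∈ X. Then the set of extended values of f at p equals the intersection ⋂_{U ∈ 𝔑(p)} closure(f(U)) over all neighborhoods U of p. -/
open Filter Topology Set

universe u v w

variable {X : Type u} {Y : Type v} [TopologicalSpace X] [TopologicalSpace Y]

theorem stmt8 [T2Space Y] (f : X → Y) (p : X) (Z : Set Y)
    (hZ : ExtendedValues f p Z) :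
    Z = ⋂ U ∈ 𝓝 p, closure (f '' U) := by
  obtain ⟨hfin, hne, ha, hb⟩ := hZ
  apply Set.Subset.antisymm
  · intro y hy
    simp only [Set.mem_iInter]
    intro U hU
    rw [mem_closure_iff_nhds]
    intro V hV
    obtain ⟨z, hz⟩ := ha y hy U hU V hV
    exact ⟨z, hz.2, hz.1⟩
  · intro y hy
    by_contra hyZ
    have hsep : SeparatedNhds ({y} : Set Y) Z :=
      SeparatedNhds.of_isCompact_isCompact isCompact_singleton hfin.isCompact
        (by simpa using hyZ)
    obtain ⟨W, V, hWo, hVo, hyW, hZV, hdisj⟩ := hsep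
    obtain ⟨U, hU, hfU⟩ := hb V (hVo.mem_nhdsSet.2 hZV)
    have hycl : y ∈ closure (f '' U) := by
      simp only [Set.mem_iInter] at hy
      exact hy U hU
    rw [mem_closure_iff_nhds] at hycl
    obtain ⟨z, hzW, hzf⟩ := hycl W (hWo.mem_nhds (hyW rfl))
    exact hdisj.ne_of_mem hzW (hfU hzf) rfl
end

section
/- Let Y be a regular Hausdorff space and f : X → Y globally multi-split continuous. Then the star multifunction f* : X ⇉ Y, which sends each p ∈ X to the set of extended values of f at p, is upper semicontinuous at every point of X. -/
/-!
Every extended value of `f` at `x` is adherent to `f '' U` for each neighbourhood `U` of `x`.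
Given an open `W ⊇ f* p`, property (b) gives a neighbourhood `U` of `p` with `f '' U ⊆ W`, so
`f* x ⊆ closure W` for all `x` in the interior of `U`. Regularity lets us choose `W` with
`closure W ⊆ V`, since `f* p` is finite and hence compact.
-/

open Filter Topology Set

universe u v w

variable {X : Type u} {Y : Type v} [TopologicalSpace X] [TopologicalSpace Y]

theorem ExtendedValues.subset_closure_image {f : X → Y} {p : X} {Z : Set Y}
    (h : ExtendedValues f p Z) {U : Set X} (hU : U ∈ 𝓝 p) : Z ⊆ closure (f '' U) :=
  fun y hy => mem_closure_iff_nhds.2 fun V hV => by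
    simpa only [inter_comm] using h.2.2.1 y hy U hU V hV

theorem ExtendedValues.eventually_subset_closure {f : X → Y} {F : X → Set Y}
    (hF : ∀ x, ExtendedValues f x (F x)) {p : X} {W : Set Y} (hW : W ∈ 𝓝ˢ (F p)) :
    ∀ᶠ x in 𝓝 p, F x ⊆ closure W := by
  obtain ⟨U, hU, hfU⟩ := (hF p).2.2.2 W hW
  filter_upwards [interior_mem_nhds.2 hU] with x hx
  calc F x ⊆ closure (f '' interior U) :=
        (hF x).subset_closure_image (isOpen_interior.mem_nhds hx)
    _ ⊆ closure W := closure_mono ((image_mono interior_subset).trans hfU)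

theorem stmt10_general [T3Space Y] (f : X → Y)
    (fstar : X → Set Y) (hstar : ∀ p : X, ExtendedValues f p (fstar p)) :
    ∀ p : X, ∀ V ∈ 𝓝ˢ (fstar p), {x : X | fstar x ⊆ V} ∈ 𝓝 p := by
  intro p V hV
  obtain ⟨W, hWo, hZW, hWV⟩ := (hstar p).1.isCompact.exists_isOpen_closure_subset hV
  filter_upwards [ExtendedValues.eventually_subset_closure hstar (hWo.mem_nhdsSet.2 hZW)]
    with x hx using hx.trans hWV

theorem stmt10 [T3Space Y] (f : X → Y) (hf : ∀ p : X, MultiSplitAt f p)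
    (fstar : X → Set Y) (hstar : ∀ p : X, ExtendedValues f p (fstar p)) :
    ∀ p : X, ∀ V ∈ 𝓝ˢ (fstar p), {x : X | fstar x ⊆ V} ∈ 𝓝 p :=
  stmt10_general f fstar hstar
end

section
/- Let Y be a regular Hausdorff space and f : X → Y globally multi-split continuous. Then the graph of the star multifunction f* equals the closure of the graph of f in X × Y, i.e. cl(gr(f)) = gr(f*). -/
open Filter Topology Set

universe u v w

variable {X : Type u} {Y : Type v} [TopologicalSpace X] [TopologicalSpace Y]

theorem stmt11 [T3Space Y] (f : X → Y) (hf : ∀ p : X, MultiSplitAt f p)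
    (fstar : X → Set Y) (hstar : ∀ p : X, ExtendedValues f p (fstar p)) :
    closure {q : X × Y | q.2 = f q.1} = {q : X × Y | q.2 ∈ fstar q.1} := by
  ext ⟨p, y⟩
  obtain ⟨hfin, -, ha, hb⟩ := hstar p
  simp only [mem_setOf_eq, mem_closure_iff_nhds]
  constructor
  · intro h
    by_contra hy
    have hZc : IsClosed (fstar p) := hfin.isClosed
    have hdisj : Disjoint (𝓝ˢ (fstar p)) (𝓝 y) :=
      RegularSpace.regular hZc hy
    obtain ⟨W, hW, V, hV, hWV⟩ := Filter.disjoint_iff.1 hdisj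
    obtain ⟨U, hU, hfU⟩ := hb W hW
    obtain ⟨⟨x, z⟩, htq, hq⟩ := h (U ×ˢ V) (prod_mem_nhds hU hV)
    simp only [mem_setOf_eq] at hq
    have h1 : f x ∈ W := hfU ⟨x, htq.1, rfl⟩
    have h2 : f x ∈ V := hq ▸ htq.2
    exact absurd rfl (Set.disjoint_iff_forall_ne.1 hWV h1 h2)
  · intro hy t ht
    rw [mem_nhds_prod_iff] at ht
    obtain ⟨U, hU, V, hV, hUV⟩ := ht
    obtain ⟨z, ⟨x, hxU, hfx⟩, hzV⟩ := ha y hy U hU V hV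
    exact ⟨(x, z), hUV ⟨hxU, hzV⟩, hfx.symm⟩
end

section
/- Let F : X ⇉ Y be a multifunction with non-empty finite values that is upper semicontinuous at p ∈ X. Then every selection f : X → Y of F (i.e. f(x) ∈ F(x) for all x) is multi-split continuous at p. -/
open Filter Topology Set

universe u v w

variable {X : Type u} {Y : Type v} [TopologicalSpace X] [TopologicalSpace Y]

theorem stmt12 (F : X → Set Y) (p : X)
    (hne : ∀ x, (F x).Nonempty) (hfin : ∀ x, (F x).Finite)
    (husc : ∀ V ∈ 𝓝ˢ (F p), {x : X | F x ⊆ V} ∈ 𝓝 p)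
    (f : X → Y) (hsel : ∀ x, f x ∈ F x) :
    MultiSplitAt f p := by
  classical
  set Z : Set Y := {y ∈ F p | ∀ U ∈ 𝓝 p, ∀ V ∈ 𝓝 y, (f '' U ∩ V).Nonempty} with hZ
  -- key property (b)
  have hb : ∀ V ∈ 𝓝ˢ Z, ∃ U ∈ 𝓝 p, f '' U ⊆ V := by
    intro V hV
    -- for each y ∈ F p \ Z choose separating neighborhoods
    have hch : ∀ y ∈ F p \ Z, ∃ U ∈ 𝓝 p, ∃ W ∈ 𝓝 y, f '' U ∩ W = ∅ := by
      intro y hy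
      have := hy.2
      simp only [hZ, Set.mem_setOf_eq, not_and, not_forall] at this
      obtain ⟨U, hU, W, hW, h⟩ := this hy.1
      exact ⟨U, hU, W, hW, Set.not_nonempty_iff_eq_empty.mp h⟩
    choose! U hU W hW hdis using hch
    have hfinD : (F p \ Z).Finite := (hfin p).subset (diff_subset)
    -- big neighborhood of F p
    set Wbig : Set Y := V ∪ ⋃ y ∈ F p \ Z, W y with hWbig
    have hWmem : Wbig ∈ 𝓝ˢ (F p) := by
      rw [mem_nhdsSet_iff_forall]
      intro y hy
      by_cases hyZ : y ∈ Z
      · exact Filter.mem_of_superset ((mem_nhdsSet_iff_forall.mp hV) y hyZ)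
          subset_union_left
      · have hyD : y ∈ F p \ Z := ⟨hy, hyZ⟩
        exact Filter.mem_of_superset (hW y hyD)
          ((Set.subset_biUnion_of_mem hyD).trans subset_union_right)
    have hU1 : {x : X | F x ⊆ Wbig} ∈ 𝓝 p := husc _ hWmem
    have hU2 : (⋂ y ∈ F p \ Z, U y) ∈ 𝓝 p :=
      (Filter.biInter_mem hfinD).mpr fun y hy => hU y hy
    refine ⟨{x : X | F x ⊆ Wbig} ∩ ⋂ y ∈ F p \ Z, U y, Filter.inter_mem hU1 hU2, ?_⟩
    rintro _ ⟨x, ⟨hx1, hx2⟩, rfl⟩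
    have hfx : f x ∈ Wbig := hx1 (hsel x)
    rcases hfx with h | h
    · exact h
    · exfalso
      simp only [Set.mem_iUnion] at h
      obtain ⟨y, hy, hfy⟩ := h
      have hxU : x ∈ U y := by
        have := Set.mem_iInter₂.mp hx2 y hy
        exact this
      have : f x ∈ f '' U y ∩ W y := ⟨⟨x, hxU, rfl⟩, hfy⟩
      rw [hdis y hy] at this
      exact this
  -- Z is nonempty
  have hZne : Z.Nonempty := by
    rw [Set.nonempty_iff_ne_empty]
    intro h
    have : (∅ : Set Y) ∈ 𝓝ˢ Z := by rw [h]; simp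
    obtain ⟨U, hU, hsub⟩ := hb ∅ this
    exact hsub ⟨p, mem_of_mem_nhds hU, rfl⟩
  exact ⟨Z, (hfin p).subset (Set.sep_subset _ _), hZne,
    fun y hy => hy.2, hb⟩
end

section
/- Let F : X ⇉ Y be a multifunction that is subcontinuous at p ∈ X, and suppose the set Z̃_p of all y ∈ Y that arise as cluster points of nets ⟨y_λ⟩ with y_λ ∈ F(x_λ) for some net ⟨x_λ⟩ → p is finite. Then every selection of F is multi-split continuous at p. -/
open Filter Topology Set

universe u v w

variable {X : Type u} {Y : Type v} [TopologicalSpace X] [TopologicalSpace Y]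

theorem stmt13 (F : X → Set Y) (hne : ∀ x, (F x).Nonempty) (p : X)
    (hsub : ∀ f : X → Y, (∀ x, f x ∈ F x) →
      ∀ (ι : Type (max u v)) (le : ι → ι → Prop) (x : ι → X),
        Nonempty ι → IsDirectedPre le → IsNetLimit le x p →
          ∃ y : Y, IsNetCluster le (f ∘ x) y)
    (hfin : {y : Y | ∃ (ι : Type (max u v)) (le : ι → ι → Prop) (x : ι → X)
        (yl : ι → Y), Nonempty ι ∧ IsDirectedPre le ∧ IsNetLimit le x p ∧
          (∀ i, yl i ∈ F (x i)) ∧ IsNetCluster le yl y}.Finite) :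
    ∀ f : X → Y, (∀ x, f x ∈ F x) → MultiSplitAt f p := by
  intro f hf
  set Z : Set Y := {y | ∀ U ∈ 𝓝 p, ∀ V ∈ 𝓝 y, (f '' U ∩ V).Nonempty} with hZdef
  -- helper: element production
  have hpick : ∀ y ∈ Z, ∀ U ∈ 𝓝 p, ∀ V ∈ 𝓝 y, ∃ x, x ∈ U ∧ f x ∈ V := by
    intro y hy U hU V hV
    obtain ⟨w, ⟨x0, hx0, rfl⟩, hw⟩ := hy U hU V hV
    exact ⟨x0, hx0, hw⟩
  -- Z is nonempty : canonical net
  have hZne : Z.Nonempty := by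
    classical
    let ι : Type (max u v) := ULift.{v} {q : Set X × X // q.1 ∈ 𝓝 p ∧ q.2 ∈ q.1}
    let le : ι → ι → Prop := fun i j => j.1.1.1 ⊆ i.1.1.1
    let x : ι → X := fun i => i.1.1.2
    have hne' : Nonempty ι := ⟨⟨⟨(Set.univ, p), univ_mem, mem_univ p⟩⟩⟩
    have hdir : IsDirectedPre le := by
      refine ⟨fun i => subset_rfl, fun i j k h1 h2 => h2.trans h1, fun i j => ?_⟩
      refine ⟨⟨⟨(i.1.1.1 ∩ j.1.1.1, p), inter_mem i.1.2.1 j.1.2.1,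
        ⟨mem_of_mem_nhds i.1.2.1, mem_of_mem_nhds j.1.2.1⟩⟩⟩, inter_subset_left,
        inter_subset_right⟩
    have hlim : IsNetLimit le x p := by
      intro U hU
      exact ⟨⟨⟨(U, p), hU, mem_of_mem_nhds hU⟩⟩, fun i hi => hi i.1.2.2⟩
    obtain ⟨y, hy⟩ := hsub f hf ι le x hne' hdir hlim
    refine ⟨y, fun U hU V hV => ?_⟩
    obtain ⟨i, hle, hfi⟩ := hy V hV ⟨⟨(U, p), hU, mem_of_mem_nhds hU⟩⟩
    exact ⟨f (x i), ⟨x i, hle i.1.2.2, rfl⟩, hfi⟩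
  -- Z is finite : contained in the big set
  have hZfin : Z.Finite := by
    refine hfin.subset ?_
    intro y hy
    classical
    let ι : Type (max u v) :=
      {q : Set X × Set Y × X // q.1 ∈ 𝓝 p ∧ q.2.1 ∈ 𝓝 y ∧ q.2.2 ∈ q.1 ∧ f q.2.2 ∈ q.2.1}
    let le : ι → ι → Prop := fun i j => j.1.1 ⊆ i.1.1 ∧ j.1.2.1 ⊆ i.1.2.1
    let x : ι → X := fun i => i.1.2.2
    obtain ⟨x0, hx0U, hx0V⟩ := hpick y hy Set.univ univ_mem Set.univ univ_mem
    have hne' : Nonempty ι := ⟨⟨(Set.univ, Set.univ, x0), univ_mem, univ_mem, hx0U, hx0V⟩⟩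
    refine ⟨ι, le, x, fun i => f (x i), hne', ?_, ?_, fun i => hf (x i), ?_⟩
    · refine ⟨fun i => ⟨subset_rfl, subset_rfl⟩,
        fun i j k h1 h2 => ⟨h2.1.trans h1.1, h2.2.trans h1.2⟩, fun i j => ?_⟩
      obtain ⟨x', hx'U, hx'V⟩ := hpick y hy (i.1.1 ∩ j.1.1) (inter_mem i.2.1 j.2.1)
        (i.1.2.1 ∩ j.1.2.1) (inter_mem i.2.2.1 j.2.2.1)
      exact ⟨⟨(i.1.1 ∩ j.1.1, i.1.2.1 ∩ j.1.2.1, x'),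
        inter_mem i.2.1 j.2.1, inter_mem i.2.2.1 j.2.2.1, hx'U, hx'V⟩,
        ⟨inter_subset_left, inter_subset_left⟩, ⟨inter_subset_right, inter_subset_right⟩⟩
    · intro U hU
      obtain ⟨x', hx'U, hx'V⟩ := hpick y hy U hU Set.univ univ_mem
      exact ⟨⟨(U, Set.univ, x'), hU, univ_mem, hx'U, hx'V⟩, fun i hi => hi.1 i.2.2.2.1⟩
    · intro V hV i₀
      obtain ⟨x', hx'U, hx'V⟩ := hpick y hy i₀.1.1 i₀.2.1 (i₀.1.2.1 ∩ V)
        (inter_mem i₀.2.2.1 hV)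
      exact ⟨⟨(i₀.1.1, i₀.1.2.1 ∩ V, x'), i₀.2.1, inter_mem i₀.2.2.1 hV, hx'U, hx'V⟩,
        ⟨subset_rfl, inter_subset_left⟩, hx'V.2⟩
  -- condition (b)
  have hb : ∀ V ∈ 𝓝ˢ Z, ∃ U ∈ 𝓝 p, f '' U ⊆ V := by
    intro V hV
    by_contra hcon
    push_neg at hcon
    have hwit : ∀ U ∈ 𝓝 p, ∃ x ∈ U, f x ∉ V := by
      intro U hU
      have h := hcon U hU
      rw [Set.not_subset] at h
      obtain ⟨w, ⟨x', hx', rfl⟩, hw⟩ := h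
      exact ⟨x', hx', hw⟩
    classical
    let ι : Type (max u v) := ULift.{v} {q : Set X × X // q.1 ∈ 𝓝 p ∧ q.2 ∈ q.1 ∧ f q.2 ∉ V}
    let le : ι → ι → Prop := fun i j => j.1.1.1 ⊆ i.1.1.1
    let x : ι → X := fun i => i.1.1.2
    obtain ⟨x0, hx0, hfx0⟩ := hwit Set.univ univ_mem
    have hne' : Nonempty ι := ⟨⟨⟨(Set.univ, x0), univ_mem, hx0, hfx0⟩⟩⟩
    have hdir : IsDirectedPre le := by
      refine ⟨fun i => subset_rfl, fun i j k h1 h2 => h2.trans h1, fun i j => ?_⟩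
      obtain ⟨x', hx', hfx'⟩ := hwit (i.1.1.1 ∩ j.1.1.1) (inter_mem i.1.2.1 j.1.2.1)
      exact ⟨⟨⟨(i.1.1.1 ∩ j.1.1.1, x'), inter_mem i.1.2.1 j.1.2.1, hx', hfx'⟩⟩,
        inter_subset_left, inter_subset_right⟩
    have hlim : IsNetLimit le x p := by
      intro U hU
      obtain ⟨x', hx', hfx'⟩ := hwit U hU
      exact ⟨⟨⟨(U, x'), hU, hx', hfx'⟩⟩, fun i hi => hi i.1.2.2.1⟩
    obtain ⟨y, hy⟩ := hsub f hf ι le x hne' hdir hlim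
    have hyZ : y ∈ Z := by
      intro U hU W hW
      obtain ⟨x', hx', hfx'⟩ := hwit U hU
      obtain ⟨i, hle, hfi⟩ := hy W hW ⟨⟨(U, x'), hU, hx', hfx'⟩⟩
      exact ⟨f (x i), ⟨x i, hle i.1.2.2.1, rfl⟩, hfi⟩
    have hVy : V ∈ 𝓝 y := by
      rw [mem_nhdsSet_iff_forall] at hV
      exact hV y hyZ
    obtain ⟨i, _, hfi⟩ := hy V hVy (Classical.arbitrary ι)
    exact i.1.2.2.2 hfi
  exact ⟨Z, hZfin, hZne, fun y hy => hy, hb⟩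
end

section
/- Let Y be a Hausdorff space and f : X → Y a function. Then f is continuous if and only if f is globally multi-split continuous and the graph of f is closed in X × Y. -/
open Filter Topology Set

universe u v w

variable {X : Type u} {Y : Type v} [TopologicalSpace X] [TopologicalSpace Y]

theorem stmt15 [T2Space Y] (f : X → Y) :
    Continuous f ↔
      (∀ p : X, MultiSplitAt f p) ∧ IsClosed {q : X × Y | q.2 = f q.1} := by
  constructor
  · intro hf
    refine ⟨fun p => ⟨{f p}, finite_singleton _, singleton_nonempty _, ?_, ?_⟩, ?_⟩
    · rintro y hy U hU V hV
      rw [mem_singleton_iff] at hy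
      subst hy
      have hx : p ∈ f ⁻¹' V ∩ U :=
        ⟨mem_of_mem_nhds ((hf.continuousAt).preimage_mem_nhds hV), mem_of_mem_nhds hU⟩
      exact ⟨f p, ⟨p, hx.2, rfl⟩, hx.1⟩
    · intro V hV
      rw [nhdsSet_singleton] at hV
      exact ⟨f ⁻¹' V, (hf.continuousAt).preimage_mem_nhds hV, image_preimage_subset f V⟩
    · exact isClosed_eq continuous_snd (hf.comp continuous_fst)
  · rintro ⟨hms, hcl⟩
    rw [continuous_iff_continuousAt]
    intro p
    obtain ⟨Z, hfin, hne, ha, hb⟩ := hms p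
    have hZ : Z = {f p} := by
      have key : ∀ y ∈ Z, y = f p := by
        intro y hy
        have hcls : (p, y) ∈ closure {q : X × Y | q.2 = f q.1} := by
          rw [mem_closure_iff_nhds]
          intro t ht
          rw [nhds_prod_eq, mem_prod_iff] at ht
          obtain ⟨U, hU, V, hV, hUV⟩ := ht
          obtain ⟨z, ⟨x, hxU, rfl⟩, hzV⟩ := ha y hy U hU V hV
          exact ⟨(x, f x), hUV ⟨hxU, hzV⟩, rfl⟩
        rw [hcl.closure_eq] at hcls
        exact hcls
      obtain ⟨y0, hy0⟩ := hne
      apply Subset.antisymm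
      · intro y hy; exact key y hy
      · intro y hy; rw [mem_singleton_iff] at hy
        rw [hy, ← key y0 hy0]; exact hy0
    intro V hV
    subst hZ
    obtain ⟨U, hU, hUV⟩ := hb V (by rwa [nhdsSet_singleton])
    exact mem_map.mpr (mem_of_superset hU (image_subset_iff.mp hUV))
end

section
/- Let f : X → Y be a closed, finite-to-one, continuous surjection. Then every function g : Y → X with f(g(y)) = y for all y ∈ Y (i.e. every selection of the inverse-image multifunction f⁻¹) is globally multi-split continuous. -/
open Filter Topology Set

universe u v w

variable {X : Type u} {Y : Type v} [TopologicalSpace X] [TopologicalSpace Y]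

theorem stmt17 (f : X → Y) (hcont : Continuous f) (hclosed : IsClosedMap f)
    (hfin : ∀ y : Y, (f ⁻¹' {y}).Finite) (hsurj : Function.Surjective f)
    (g : Y → X) (hg : ∀ y : Y, f (g y) = y) :
    ∀ q : Y, MultiSplitAt g q := by
  intro q
  set F : Set X := f ⁻¹' {q} with hF
  have hFfin : F.Finite := hfin q
  -- key lemma
  have key : ∀ S ⊆ F, ∀ O : Set X, IsOpen O → F \ S ⊆ O →
      (∀ x ∈ S, ¬ (∀ U ∈ 𝓝 q, ∀ V ∈ 𝓝 x, (g '' U ∩ V).Nonempty)) →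
      ∃ U ∈ 𝓝 q, g '' U ⊆ O := by
    intro S hSF O hO hFS hS
    have hchoice : ∀ x ∈ S, ∃ V : Set X, IsOpen V ∧ x ∈ V ∧ ∃ U ∈ 𝓝 q,
        g '' U ∩ V = ∅ := by
      intro x hx
      have h := hS x hx
      push_neg at h
      obtain ⟨U, hU, V, hV, hUV⟩ := h
      obtain ⟨V', hV'sub, hV'open, hxV'⟩ := mem_nhds_iff.mp hV
      refine ⟨V', hV'open, hxV', U, hU, ?_⟩
      exact Set.eq_empty_of_subset_empty
        (hUV ▸ Set.inter_subset_inter_right _ hV'sub)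
    choose! V hVopen hxV U hU hUV using hchoice
    have hSfin : S.Finite := hFfin.subset hSF
    set A : Set X := O ∪ ⋃ x ∈ S, V x with hA
    have hAopen : IsOpen A := hO.union (isOpen_biUnion fun x hx => hVopen x hx)
    have hFA : F ⊆ A := by
      intro x hx
      by_cases h : x ∈ S
      · exact Or.inr (Set.mem_biUnion h (hxV x h))
      · exact Or.inl (hFS ⟨hx, h⟩)
    have hq : q ∉ f '' Aᶜ := by
      rintro ⟨c, hc, rfl⟩
      exact hc (hFA rfl)
    have hW : (f '' Aᶜ)ᶜ ∈ 𝓝 q :=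
      (hclosed _ hAopen.isClosed_compl).isOpen_compl.mem_nhds hq
    refine ⟨(f '' Aᶜ)ᶜ ∩ ⋂ x ∈ S, U x,
      Filter.inter_mem hW ((Filter.biInter_mem hSfin).mpr fun x hx => hU x hx), ?_⟩
    rintro _ ⟨y, hy, rfl⟩
    have hgy : g y ∈ A := by
      by_contra h
      exact hy.1 ⟨g y, h, hg y⟩
    rcases hgy with h | h
    · exact h
    · obtain ⟨x, hx, hmem⟩ := Set.mem_iUnion₂.mp h
      have hyU : y ∈ U x := by
        have := hy.2
        rw [Set.mem_iInter₂] at this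
        exact this x hx
      have : g y ∈ g '' (U x) ∩ V x := ⟨⟨y, hyU, rfl⟩, hmem⟩
      rw [hUV x hx] at this
      exact absurd this (Set.notMem_empty _)
  -- the candidate set Z
  refine ⟨{x ∈ F | ∀ U ∈ 𝓝 q, ∀ V ∈ 𝓝 x, (g '' U ∩ V).Nonempty}, ?_, ?_, ?_, ?_⟩
  · exact hFfin.subset (Set.sep_subset _ _)
  · by_contra h
    rw [Set.not_nonempty_iff_eq_empty, Set.eq_empty_iff_forall_notMem] at h
    obtain ⟨U, hU, hsub⟩ := key F le_rfl ∅ isOpen_empty (by simp)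
      (fun x hx hP => h x ⟨hx, hP⟩)
    exact hsub ⟨q, mem_of_mem_nhds hU, rfl⟩
  · exact fun x hx => hx.2
  · intro W hW
    obtain ⟨O, hOopen, hZO, hOW⟩ := mem_nhdsSet_iff_exists.mp hW
    obtain ⟨U, hU, hsub⟩ := key (F \ {x ∈ F | ∀ U ∈ 𝓝 q, ∀ V ∈ 𝓝 x,
        (g '' U ∩ V).Nonempty}) Set.diff_subset O hOopen
      (fun x hx => hZO (Classical.byContradiction fun h => hx.2 ⟨hx.1, h⟩))
      (fun x hx hP => hx.2 ⟨hx.1, hP⟩)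
    exact ⟨U, hU, hsub.trans hOW⟩
end

section
/- Let f : X → Y be a globally multi-split continuous surjection. If X is compact, then Y is compact. -/
open Filter Topology Set

universe u v w

variable {X : Type u} {Y : Type v} [TopologicalSpace X] [TopologicalSpace Y]

theorem stmt18 [CompactSpace X] (f : X → Y)
    (hf : ∀ p : X, MultiSplitAt f p) (hsurj : Function.Surjective f) :
    CompactSpace Y := by
  rw [← isCompact_univ_iff]
  apply isCompact_of_finite_subcover
  intro ι U hU hcov
  classical
  have key : ∀ p : X, ∃ (s : Finset ι) (W : Set X), W ∈ 𝓝 p ∧ f '' W ⊆ ⋃ i ∈ s, U i := by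
    intro p
    obtain ⟨Z, hfin, hne, _, hb⟩ := hf p
    have hsub : ∀ y ∈ Z, ∃ i, y ∈ U i := fun y _ => mem_iUnion.mp (hcov (mem_univ y))
    choose g hg using hsub
    set s : Finset ι := hfin.toFinset.attach.image
      (fun y => g y.1 (hfin.mem_toFinset.mp y.2)) with hs
    have hZV : Z ⊆ ⋃ i ∈ s, U i := by
      intro y hy
      refine mem_biUnion ?_ (hg y hy)
      refine Finset.mem_image.mpr ⟨⟨y, hfin.mem_toFinset.mpr hy⟩, Finset.mem_attach _ _, rfl⟩
    have hVopen : IsOpen (⋃ i ∈ s, U i) := isOpen_biUnion fun i _ => hU i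
    obtain ⟨W, hW, hWsub⟩ := hb _ (hVopen.mem_nhdsSet.mpr hZV)
    exact ⟨s, W, hW, hWsub⟩
  choose s W hW hWsub using key
  have hcoverX : (univ : Set X) ⊆ ⋃ p, interior (W p) := fun x _ =>
    mem_iUnion.mpr ⟨x, mem_interior_iff_mem_nhds.mpr (hW x)⟩
  obtain ⟨t, ht⟩ := isCompact_univ.elim_finite_subcover _
    (fun p => isOpen_interior) hcoverX
  refine ⟨t.biUnion s, fun y _ => ?_⟩
  obtain ⟨x, rfl⟩ := hsurj y
  obtain ⟨p, hp, hx⟩ := mem_iUnion₂.mp (ht (mem_univ x))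
  have : f x ∈ ⋃ i ∈ s p, U i := hWsub p ⟨x, interior_subset hx, rfl⟩
  obtain ⟨i, hi, hfx⟩ := mem_iUnion₂.mp this
  exact mem_iUnion₂.mpr ⟨i, Finset.mem_biUnion.mpr ⟨p, hp, hi⟩, hfx⟩
end
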